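/- arXiv:2312.02339 — 10 statements merged into one kernel-verified Lean document; each statement's English description precedes it below -/
import Mathlib

section
/- A linear map W: ℝ^(n×k) → ℝ^(n'×k) satisfies W(XS) = W(X)S for all diagonal matrices S with ±1 diagonal entries if and only if there exist linear maps W₁,...,W_k : ℝⁿ → ℝ^(n') such that W(X) has j-th column equal to W_j applied to the j-th column of X, for all X. -/
/-!
Multiplying `X` by the sign matrix `S` that flips every column except the `j`-th gives
`X S = 2 E_j - X`, where `E_j` keeps only the `j`-th column of `X`. Since column `j` of
`W X S` is column `j` of `W X`, linearity yields `2 (W X)_j = 2 (W E_j)_j`, so column `j` of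
`W X` depends linearly on column `j` of `X` alone. Conversely a columnwise map commutes with
right multiplication by any diagonal matrix.
-/

namespace Matrix

variable {R m m' ι : Type*} [CommRing R] [DecidableEq ι]

def singleCol (j : ι) : (m → R) →ₗ[R] Matrix m ι R :=
  (transposeLinearEquiv ι m R R).toLinearMap ∘ₗ LinearMap.single R (fun _ => m → R) j

@[simp]
theorem singleCol_apply (j : ι) (v : m → R) (i : m) (l : ι) :
    singleCol j v i l = if l = j then v i else 0 := by
  change (Pi.single (M := fun _ => m → R) j v) l i = _
  by_cases h : l = j
  · subst h; simp
  · simp [h]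

def columnMap (W : Matrix m ι R →ₗ[R] Matrix m' ι R) (j : ι) :
    (m → R) →ₗ[R] m' → R :=
  LinearMap.proj j ∘ₗ (transposeLinearEquiv m' ι R R).toLinearMap ∘ₗ W ∘ₗ singleCol j

variable [Fintype ι]

def IsSignEquivariant (W : Matrix m ι R →ₗ[R] Matrix m' ι R) : Prop :=
  ∀ s : ι → R, (∀ j, s j = 1 ∨ s j = -1) → ∀ X, W (X * diagonal s) = W X * diagonal s

theorem mul_diagonal_ite_one_neg_one (X : Matrix m ι R) (j : ι) :
    X * diagonal (fun l => if l = j then (1 : R) else -1) =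
      (2 : R) • singleCol j (Xᵀ j) - X := by
  ext i l
  by_cases h : l = j
  · subst h
    simp only [mul_diagonal, if_pos, mul_one, sub_apply, smul_apply, singleCol_apply,
      transpose_apply, smul_eq_mul]
    ring
  · simp [mul_diagonal, h]

theorem IsSignEquivariant.apply_eq_apply_singleCol [NoZeroDivisors R] [NeZero (2 : R)]
    {W : Matrix m ι R →ₗ[R] Matrix m' ι R} (hW : IsSignEquivariant W)
    (X : Matrix m ι R) (i : m') (j : ι) :
    W X i j = W (singleCol j (Xᵀ j)) i j := by
  have h := congr_fun₂
    (hW (fun l => if l = j then 1 else -1) (fun l => ite_eq_or_eq (l = j) 1 (-1)) X) i j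
  rw [mul_diagonal_ite_one_neg_one, mul_diagonal] at h
  simp only [map_sub, map_smul, sub_apply, smul_apply, smul_eq_mul, if_pos, mul_one] at h
  exact mul_left_cancel₀ (two_ne_zero' R) (by linear_combination -h)

theorem map_mul_diagonal_of_columnwise {W : Matrix m ι R →ₗ[R] Matrix m' ι R}
    {Ws : ι → (m → R) →ₗ[R] m' → R} (hWs : ∀ X i j, W X i j = Ws j (Xᵀ j) i)
    (s : ι → R) (X : Matrix m ι R) : W (X * diagonal s) = W X * diagonal s := by
  ext i j
  have hcol : (X * diagonal s)ᵀ j = s j • Xᵀ j := by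
    ext i'
    simp [mul_diagonal, mul_comm]
  rw [hWs, hcol, map_smul, mul_diagonal, hWs, Pi.smul_apply, smul_eq_mul, mul_comm]

end Matrix

/-- A linear map `W : ℝ^(n×k) → ℝ^(n'×k)` is sign equivariant
(`W (X S) = W X * S` for all diagonal ±1 matrices `S`) iff there are linear maps
`W₁, …, W_k : ℝⁿ → ℝ^(n')` acting columnwise. -/
theorem stmt0 (n k n' : ℕ)
    (W : Matrix (Fin n) (Fin k) ℝ →ₗ[ℝ] Matrix (Fin n') (Fin k) ℝ) :
    (∀ (s : Fin k → ℝ), (∀ j, s j = 1 ∨ s j = -1) →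
      ∀ X, W (X * Matrix.diagonal s) = W X * Matrix.diagonal s)
    ↔ ∃ Ws : Fin k → ((Fin n → ℝ) →ₗ[ℝ] (Fin n' → ℝ)),
        ∀ X (i : Fin n') (j : Fin k),
          W X i j = Ws j (fun i' => X i' j) i := by
  constructor
  · intro (hW : Matrix.IsSignEquivariant W)
    exact ⟨Matrix.columnMap W, hW.apply_eq_apply_singleCol⟩
  · rintro ⟨Ws, hWs⟩ s - X
    exact Matrix.map_mul_diagonal_of_columnwise hWs s X
end

section
/- If a linear map W: ℝ^(n×k) → ℝ^(n'×k) is sign equivariant, then for every output index (i',j') and every input index (i,j) with j ≠ j', the coefficient of X_{i,j} in W(X)_{i',j'} is zero; i.e., W(X)_{i',j'} depends only on the j'-th column of X. -/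
/-!
Flipping the sign of column `j` negates the basis matrix `E_{ij}` but leaves column `j' ≠ j`
of every output untouched, so the coefficient `W(E_{ij})_{i'j'}` equals its own negative.
-/

open Matrix

variable {m m' n R : Type*} [DecidableEq m] [DecidableEq n]

theorem Pi.mulSingle_neg_one_eq_one_or_neg_one [Monoid R] [HasDistribNeg R] (j l : n) :
    (Pi.mulSingle j (-1) : n → R) l = 1 ∨ (Pi.mulSingle j (-1) : n → R) l = -1 := by
  rw [Pi.mulSingle_apply]
  split_ifs
  · exact Or.inr rfl
  · exact Or.inl rfl

variable [Fintype n]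

theorem Matrix.single_mul_diagonal [Semiring R] (i : m) (j : n) (c : R) (d : n → R) :
    single i j c * diagonal d = single i j (c * d j) := by
  ext a b
  rw [mul_diagonal, single_apply, single_apply]
  split_ifs with h
  · rw [h.2]
  · exact zero_mul _

theorem Matrix.single_mul_diagonal_mulSingle_neg_one [Ring R] (i : m) (j : n) (c : R) :
    single i j c * diagonal (Pi.mulSingle j (-1 : R)) = -single i j c := by
  ext a b
  rw [single_mul_diagonal, Pi.mulSingle_eq_same, mul_neg_one, neg_apply, single_apply, single_apply]
  split_ifs
  · rfl
  · exact neg_zero.symm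

theorem map_single_apply_eq_zero_of_ne [Ring R] [IsAddTorsionFree R] {F : Type*}
    [FunLike F (Matrix m n R) (Matrix m' n R)] [AddMonoidHomClass F (Matrix m n R) (Matrix m' n R)]
    (W : F) {j : n}
    (hW : ∀ X, W (X * diagonal (Pi.mulSingle j (-1 : R))) =
      W X * diagonal (Pi.mulSingle j (-1 : R)))
    (i : m) (c : R) (i' : m') {j' : n} (hjj' : j ≠ j') :
    W (Matrix.single i j c) i' j' = 0 := by
  have h := congrFun₂ (hW (Matrix.single i j c)) i' j'
  rw [single_mul_diagonal_mulSingle_neg_one, map_neg, mul_diagonal,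
    Pi.mulSingle_eq_of_ne hjj'.symm, mul_one] at h
  exact self_eq_neg.mp h.symm

/-- If a linear map `W` is sign equivariant, then the coefficient of
`X_{i,j}` in `W(X)_{i',j'}` is zero whenever `j ≠ j'`; i.e. `W(X)_{i',j'}` depends
only on column `j'` of `X`. -/
theorem stmt1 (n k n' : ℕ)
    (W : Matrix (Fin n) (Fin k) ℝ →ₗ[ℝ] Matrix (Fin n') (Fin k) ℝ)
    (hW : ∀ (s : Fin k → ℝ), (∀ j, s j = 1 ∨ s j = -1) →
      ∀ X, W (X * Matrix.diagonal s) = W X * Matrix.diagonal s) :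
    ∀ (i : Fin n) (j : Fin k) (i' : Fin n') (j' : Fin k), j ≠ j' →
      W (Matrix.single i j 1) i' j' = 0 := by
  intro i j i' j' hjj'
  exact map_single_apply_eq_zero_of_ne W (hW _ (Pi.mulSingle_neg_one_eq_one_or_neg_one j)) i 1 i' hjj'
end

section
/- A polynomial map p: ℝ^k → ℝ^k is sign equivariant (p(Sv) = S p(v) for all diagonal sign matrices S) if and only if there exists a sign invariant polynomial map p_inv: ℝ^k → ℝ^k such that p(v) = v ⊙ p_inv(v), where ⊙ denotes the elementwise (Hadamard) product. -/
/-!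
Comparing coefficients, an identity `q (s ⊙ v) = c · q v` for all `v` forces `∏ sᵢ ^ mᵢ = c` on
every monomial `m` of `q`. Flipping the sign of `v_l` alone therefore shows that every monomial of
`p_l` contains `X_l`, so `p_l = X_l · q_l`. Equivariance then reads
`s_l v_l q_l (s ⊙ v) = s_l v_l q_l v`, an identity of polynomials from which `X_l` cancels in the
domain `ℝ[X]`, leaving the sign invariance of `q_l`. The converse is a one-line computation.
-/

open MvPolynomial

theorem Finsupp.prod_mulSingle_pow {σ M : Type*} [DecidableEq σ] [CommMonoid M]
    (m : σ →₀ ℕ) (i : σ) (a : M) :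
    (m.prod fun j e => (Pi.mulSingle i a : σ → M) j ^ e) = a ^ m i := by
  rw [Finsupp.prod, Finset.prod_eq_single i (fun j _ hj => by simp [hj])
    (fun hi => by simp [Finsupp.notMem_support_iff.mp hi])]
  simp

namespace MvPolynomial

variable {σ R : Type*}

section CommSemiring

variable [CommSemiring R]

theorem eval_bind₁_C_mul_X (s v : σ → R) (q : MvPolynomial σ R) :
    eval v (bind₁ (fun i => C (s i) * X i) q) = eval (s * v) q := by
  rw [eval, eval₂Hom_bind₁]
  simp [Pi.mul_def]

theorem bind₁_C_mul_X_monomial (s : σ → R) (d : σ →₀ ℕ) (c : R) :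
    bind₁ (fun i => C (s i) * X i) (monomial d c) =
      monomial d ((d.prod fun i e => s i ^ e) * c) := by
  rw [bind₁_monomial, monomial_eq, C_mul, Finsupp.prod, Finsupp.prod, map_prod]
  simp only [mul_pow, Finset.prod_mul_distrib, map_pow]
  ring

theorem coeff_bind₁_C_mul_X (s : σ → R) (q : MvPolynomial σ R) (m : σ →₀ ℕ) :
    coeff m (bind₁ (fun i => C (s i) * X i) q) = (m.prod fun i e => s i ^ e) * coeff m q := by
  classical
  induction q using MvPolynomial.induction_on' with
  | monomial d c =>
    rw [bind₁_C_mul_X_monomial, coeff_monomial, coeff_monomial]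
    split_ifs with h
    · rw [h]
    · rw [mul_zero]
  | add q r hq hr => rw [map_add, coeff_add, coeff_add, hq, hr, mul_add]

theorem X_dvd_of_forall_mem_support {i : σ} {p : MvPolynomial σ R}
    (h : ∀ m ∈ p.support, m i ≠ 0) : X i ∣ p := by
  rw [p.as_sum]
  exact Finset.dvd_sum fun m hm => X_dvd_monomial.mpr (Or.inr (h m hm))

end CommSemiring

section Domain

variable [CommRing R] [IsDomain R] [Infinite R]

theorem prod_pow_eq_of_eval_mul_eq {s : σ → R} {c : R} {q : MvPolynomial σ R}
    (h : ∀ v, eval (s * v) q = c * eval v q) {m : σ →₀ ℕ} (hm : m ∈ q.support) :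
    (m.prod fun i e => s i ^ e) = c := by
  have hpoly : bind₁ (fun i => C (s i) * X i) q = C c * q :=
    funext fun v => by rw [eval_bind₁_C_mul_X, h, map_mul, eval_C]
  have hcoeff := congrArg (coeff m) hpoly
  rw [coeff_bind₁_C_mul_X, coeff_C_mul] at hcoeff
  exact mul_right_cancel₀ (mem_support_iff.mp hm) hcoeff

theorem X_dvd_of_eval_mulSingle_neg_one_mul [DecidableEq σ] (hR : (-1 : R) ≠ 1) {i : σ}
    {p : MvPolynomial σ R} (h : ∀ v, eval (Pi.mulSingle i (-1) * v) p = -eval v p) :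
    X i ∣ p := by
  refine X_dvd_of_forall_mem_support fun m hm => ?_
  have hsign := prod_pow_eq_of_eval_mul_eq (c := -1) (by simpa using h) hm
  rw [Finsupp.prod_mulSingle_pow] at hsign
  exact ((neg_one_pow_eq_neg_one_iff_odd hR).mp hsign).pos.ne'

theorem eval_mul_eq_of_eval_mul_X_mul {i : σ} {s : σ → R} (hs : s i ≠ 0) {q : MvPolynomial σ R}
    (h : ∀ v, eval (s * v) (X i * q) = s i * eval v (X i * q)) (v : σ → R) :
    eval (s * v) q = eval v q := by
  have hpoly : X i * bind₁ (fun j => C (s j) * X j) q = X i * q := funext fun v => by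
    have hv := h v
    simp only [map_mul, eval_X, Pi.mul_apply, mul_assoc] at hv
    simpa [eval_bind₁_C_mul_X] using mul_left_cancel₀ hs hv
  rw [← eval_bind₁_C_mul_X, mul_left_cancel₀ (X_ne_zero i) hpoly]

end Domain

end MvPolynomial

/-- A polynomial map `p : ℝ^k → ℝ^k` is sign equivariant iff
`p(v) = v ⊙ p_inv(v)` for some sign invariant polynomial map `p_inv`. -/
theorem stmt4 (k : ℕ) (p : Fin k → MvPolynomial (Fin k) ℝ) :
    (∀ (s : Fin k → ℝ), (∀ i, s i = 1 ∨ s i = -1) →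
      ∀ (v : Fin k → ℝ) (l : Fin k),
        eval (fun i => s i * v i) (p l) = s l * eval v (p l))
    ↔ ∃ pinv : Fin k → MvPolynomial (Fin k) ℝ,
        (∀ (s : Fin k → ℝ), (∀ i, s i = 1 ∨ s i = -1) →
          ∀ (v : Fin k → ℝ) (l : Fin k),
            eval (fun i => s i * v i) (pinv l) = eval v (pinv l)) ∧
        (∀ (v : Fin k → ℝ) (l : Fin k), eval v (p l) = v l * eval v (pinv l)) := by
  constructor
  · intro hequiv
    have hdvd (l : Fin k) : X l ∣ p l := by
      refine X_dvd_of_eval_mulSingle_neg_one_mul (by norm_num) fun v => ?_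
      have hsign (i : Fin k) :
          (Pi.mulSingle l (-1) : Fin k → ℝ) i = 1 ∨ (Pi.mulSingle l (-1) : Fin k → ℝ) i = -1 := by
        by_cases hi : i = l <;> simp [hi]
      simpa [Pi.mul_def] using hequiv _ hsign v l
    choose pinv hpinv using hdvd
    refine ⟨pinv, fun s hs v l => ?_, fun v l => by simp [hpinv l]⟩
    have hsl : s l ≠ 0 := by rcases hs l with h | h <;> simp [h]
    exact eval_mul_eq_of_eval_mul_X_mul hsl (fun w => hpinv l ▸ hequiv s hs w l) v
  · rintro ⟨pinv, hinv, hfactor⟩ s hs v l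
    rw [hfactor, hfactor, hinv s hs v l]
    ring
end

section
/- For a polynomial p: ℝ^k → ℝ^k with l-th coordinate p(v)_l = Σ W^{(l)}_{d₁,...,d_k} v₁^{d₁}···v_k^{d_k}, p is sign equivariant if and only if for every l and every multi-index (d₁,...,d_k), the coefficient W^{(l)}_{d₁,...,d_k} is nonzero only when d_l is odd and all other d_i (i ≠ l) are even. -/
/-!
Substituting `X i ↦ s i * X i` multiplies the coefficient of `X^d` by `∏ i, s i ^ d i`. Over an
infinite domain, sign equivariance of `p l` is therefore the polynomial identity
`p l (s ⊙ X) = s l * p l`, i.e. `∏ i, s i ^ d i = s l` for every monomial `d` of `p l`; testing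
this on sign vectors with a single `-1` reads off the parities of the `d i`.
-/

open MvPolynomial

theorem Finsupp.prod_sign_pow_eq_iff {R σ : Type*} [CommRing R] (hR : (-1 : R) ≠ 1)
    (d : σ →₀ ℕ) (l : σ) :
    (∀ s : σ → R, (∀ i, s i = 1 ∨ s i = -1) → (d.prod fun i n => s i ^ n) = s l) ↔
      Odd (d l) ∧ ∀ i, i ≠ l → Even (d i) := by
  classical
  constructor
  · intro h
    have neg_one_pow_eq (i : σ) : (-1 : R) ^ d i = (Pi.mulSingle i (-1) : σ → R) l := by
      rw [← h (Pi.mulSingle i (-1)), Finsupp.prod_eq_single i, Pi.mulSingle_eq_same]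
      · intro j _ hji
        rw [Pi.mulSingle_eq_of_ne hji, one_pow]
      · exact fun _ => pow_zero _
      · intro j
        rcases eq_or_ne j i with rfl | hji <;> simp [*]
    refine ⟨(neg_one_pow_eq_neg_one_iff_odd hR).mp ?_, fun i hil => ?_⟩
    · rw [neg_one_pow_eq, Pi.mulSingle_eq_same]
    · rw [← neg_one_pow_eq_one_iff_even hR, neg_one_pow_eq, Pi.mulSingle_eq_of_ne' hil]
  · rintro ⟨hodd, heven⟩ s hs
    rw [Finsupp.prod_eq_single l]
    · rcases hs l with h | h <;> rw [h]
      · exact one_pow _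
      · exact hodd.neg_one_pow
    · intro i _ hil
      rcases hs i with h | h <;> rw [h]
      · exact one_pow _
      · exact (heven i hil).neg_one_pow
    · exact fun h0 => absurd (h0 ▸ hodd) Nat.not_odd_zero

namespace MvPolynomial

variable {R σ : Type*} [CommRing R]

noncomputable def scaleVars (s : σ → R) : MvPolynomial σ R →ₐ[R] MvPolynomial σ R :=
  aeval fun i => C (s i) * X i

theorem eval_scaleVars (s v : σ → R) (p : MvPolynomial σ R) :
    eval v (scaleVars s p) = eval (fun i => s i * v i) p := by
  induction p using MvPolynomial.induction_on <;> simp_all [scaleVars]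

theorem scaleVars_monomial (s : σ → R) (d : σ →₀ ℕ) (a : R) :
    scaleVars s (monomial d a) = monomial d ((d.prod fun i n => s i ^ n) * a) := by
  rw [scaleVars, aeval_monomial, monomial_eq, mul_comm _ a, C_mul, map_finsuppProd,
    algebraMap_eq, mul_assoc]
  simp only [mul_pow, Finsupp.prod_mul, C_pow]

theorem coeff_scaleVars (s : σ → R) (p : MvPolynomial σ R) (d : σ →₀ ℕ) :
    coeff d (scaleVars s p) = (d.prod fun i n => s i ^ n) * coeff d p := by
  classical
  induction p using MvPolynomial.induction_on' with
  | monomial u a =>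
    rw [scaleVars_monomial, coeff_monomial, coeff_monomial]
    split_ifs with h
    · rw [h]
    · rw [mul_zero]
  | add p q hp hq => rw [map_add, coeff_add, coeff_add, hp, hq, mul_add]

theorem scaleVars_eq_C_mul_iff [IsDomain R] (s : σ → R) (c : R) (p : MvPolynomial σ R) :
    scaleVars s p = C c * p ↔ ∀ d, coeff d p ≠ 0 → (d.prod fun i n => s i ^ n) = c := by
  simp only [MvPolynomial.ext_iff, coeff_scaleVars, coeff_C_mul]
  exact forall_congr' fun d => ⟨fun h hd => mul_right_cancel₀ hd h,
    fun h => (eq_or_ne (coeff d p) 0).elim (fun hd => by rw [hd, mul_zero, mul_zero])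
      fun hd => by rw [h hd]⟩

theorem sign_equivariant_iff_parity {R σ : Type*} [CommRing R] [IsDomain R] [Infinite R]
    (hR : (-1 : R) ≠ 1) (q : MvPolynomial σ R) (l : σ) :
    (∀ s : σ → R, (∀ i, s i = 1 ∨ s i = -1) →
      ∀ v, eval (fun i => s i * v i) q = s l * eval v q) ↔
      ∀ d, coeff d q ≠ 0 → Odd (d l) ∧ ∀ i, i ≠ l → Even (d i) := by
  have equivariant_iff (s : σ → R) :
      (∀ v, eval (fun i => s i * v i) q = s l * eval v q) ↔ scaleVars s q = C (s l) * q := by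
    simp only [MvPolynomial.funext_iff, eval_scaleVars, eval_mul, eval_C]
  simp only [equivariant_iff, scaleVars_eq_C_mul_iff, ← Finsupp.prod_sign_pow_eq_iff hR]
  exact ⟨fun h d hd s hs => h s hs d hd, fun h s hs d hd => h d hd s hs⟩

end MvPolynomial

/-- A polynomial map `p : ℝ^k → ℝ^k` is sign equivariant iff each
nonzero coefficient `W^{(l)}_{d}` has `d l` odd and `d i` even for all `i ≠ l`. -/
theorem stmt5 (k : ℕ) (p : Fin k → MvPolynomial (Fin k) ℝ) :
    (∀ (s : Fin k → ℝ), (∀ i, s i = 1 ∨ s i = -1) →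
      ∀ (v : Fin k → ℝ) (l : Fin k),
        eval (fun i => s i * v i) (p l) = s l * eval v (p l))
    ↔ ∀ (l : Fin k) (d : Fin k →₀ ℕ), coeff d (p l) ≠ 0 →
        Odd (d l) ∧ ∀ i, i ≠ l → Even (d i) := by
  rw [← forall_congr' fun l => sign_equivariant_iff_parity (by norm_num) (p l) l]
  exact ⟨fun h l s hs v => h s hs v l, fun h s hs v l => h l s hs v⟩
end

section
/- A polynomial map p: ℝ^(n×k) → ℝ from matrices to reals is invariant under independent sign flips of columns (p(VS) = p(V) for all diagonal sign matrices S ∈ diag({-1,1}^k)) if and only if every monomial with nonzero coefficient uses each column's variables an even total number of times; equivalently, there is a polynomial q on ℝ^(n×n×k) with p(V) = q([V_{i₁,j}·V_{i₂,j}]_{i₁,i₂∈[n], j∈[k]}). -/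
/-!
Flipping the sign of column `j` multiplies the coefficient of the monomial `V^d` by `(-1)` raised
to the degree of `d` in column `j`. A polynomial over an infinite domain is determined by its
values, so invariance forces every monomial of `p` to have even degree in each column.
Conversely, a product of an even number of entries of one column is a product of pairs
`V a j * V b j`, so `p` is a polynomial `q` in these products, and any such polynomial is
invariant because `s j * s j = 1`.
-/

open MvPolynomial

theorem Multiset.prod_map_mem_closure_of_even_card {α M : Type*} [CommMonoid M] (f : α → M)
    (s : Multiset α) (hs : Even (card s)) :
    (s.map f).prod ∈ Submonoid.closure (Set.range fun ab : α × α => f ab.1 * f ab.2) := by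
  set S := Submonoid.closure (Set.range fun ab : α × α => f ab.1 * f ab.2)
  suffices ∀ s : Multiset α,
      (Even (card s) → (s.map f).prod ∈ S) ∧ ∀ a, Odd (card s) → f a * (s.map f).prod ∈ S from
    (this s).1 hs
  intro s
  induction s using Multiset.induction_on with
  | empty => simp [S.one_mem]
  | cons b s ih =>
    simp only [card_cons, map_cons, prod_cons, Nat.even_add_one, Nat.odd_add_one,
      Nat.not_even_iff_odd, Nat.not_odd_iff_even]
    refine ⟨ih.2 b, fun a h => ?_⟩
    rw [← mul_assoc]
    exact S.mul_mem (Submonoid.subset_closure ⟨(a, b), rfl⟩) (ih.1 h)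

theorem Finset.prod_pow_mem_closure_of_even_sum {α M : Type*} [CommMonoid M] (s : Finset α)
    (f : α → M) (e : α → ℕ) (he : Even (∑ i ∈ s, e i)) :
    ∏ i ∈ s, f i ^ e i ∈ Submonoid.closure (Set.range fun ab : α × α => f ab.1 * f ab.2) := by
  have key := Multiset.prod_map_mem_closure_of_even_card f
    (s.val.bind fun i => Multiset.replicate (e i) i)
  rw [Multiset.card_bind, Multiset.map_bind, Multiset.prod_bind] at key
  simp only [Multiset.map_replicate, Multiset.prod_replicate, Function.comp_def,
    Multiset.card_replicate] at key
  exact key he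

theorem MvPolynomial.coeff_aeval_C_mul_X {R σ : Type*} [CommSemiring R] (c : σ → R)
    (p : MvPolynomial σ R) (d : σ →₀ ℕ) :
    coeff d (aeval (fun i => C (c i) * X i) p) = coeff d p * d.prod fun i e => c i ^ e := by
  classical
  induction p using MvPolynomial.induction_on' with
  | monomial e a =>
    have : (e.prod fun i k => (C (c i) * X i : MvPolynomial σ R) ^ k) =
        monomial e (e.prod fun i k => c i ^ k) := by
      simp only [mul_pow, Finsupp.prod_mul, ← map_pow, ← map_finsuppProd, monomial_eq]
    rw [aeval_monomial, this, algebraMap_eq, C_mul_monomial, coeff_monomial, coeff_monomial]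
    split_ifs with h <;> simp [h]
  | add p q hp hq => rw [map_add, coeff_add, hp, hq, coeff_add, add_mul]

theorem MvPolynomial.eval_aeval {R σ τ : Type*} [CommSemiring R] (x : τ → R)
    (g : σ → MvPolynomial τ R) (p : MvPolynomial σ R) :
    eval x (aeval g p) = eval (fun i => eval x (g i)) p :=
  eval₂Hom_bind₁ _ _ _ _

theorem Finsupp.prod_pow_snd {m κ M : Type*} [Fintype m] [Fintype κ] [CommMonoid M]
    (d : (m × κ) →₀ ℕ) (s : κ → M) :
    d.prod (fun ij e => s ij.2 ^ e) = ∏ j, s j ^ ∑ i, d (i, j) := by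
  rw [Finsupp.prod_fintype _ _ fun _ => pow_zero _, Fintype.prod_prod_type, Finset.prod_comm]
  simp only [Finset.prod_pow_eq_pow_sum]

section ColumnSigns

variable {R m κ : Type*}

def IsColumnSignInvariant [CommRing R] (p : MvPolynomial (m × κ) R) : Prop :=
  ∀ s : κ → R, (∀ j, s j = 1 ∨ s j = -1) → ∀ V : Matrix m κ R,
    eval (fun ij => s ij.2 * V ij.1 ij.2) p = eval (fun ij => V ij.1 ij.2) p

def HasEvenColumnDegrees [Fintype m] [CommSemiring R] (p : MvPolynomial (m × κ) R) : Prop :=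
  ∀ d : (m × κ) →₀ ℕ, coeff d p ≠ 0 → ∀ j, Even (∑ i, d (i, j))

def FactorsThroughColumnProducts [CommSemiring R] (p : MvPolynomial (m × κ) R) : Prop :=
  ∃ q : MvPolynomial (m × m × κ) R, ∀ V : Matrix m κ R,
    eval (fun ij => V ij.1 ij.2) p = eval (fun t => V t.1 t.2.2 * V t.2.1 t.2.2) q

noncomputable def columnProducts (R m κ : Type*) [CommSemiring R] :
    MvPolynomial (m × m × κ) R →ₐ[R] MvPolynomial (m × κ) R :=
  aeval fun t => X (t.1, t.2.2) * X (t.2.1, t.2.2)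

theorem IsColumnSignInvariant.hasEvenColumnDegrees [Fintype m] [Fintype κ] [CommRing R]
    [IsDomain R] [Infinite R] (hR : (-1 : R) ≠ 1) {p : MvPolynomial (m × κ) R}
    (hp : IsColumnSignInvariant p) : HasEvenColumnDegrees p := by
  classical
  intro d hd j₀
  set s : κ → R := fun j => if j = j₀ then -1 else 1
  have hs : ∀ j, s j = 1 ∨ s j = -1 := fun j => by by_cases h : j = j₀ <;> simp [s, h]
  have hfix : aeval (fun ij => C (s ij.2) * X ij) p = p := MvPolynomial.funext fun x => by
    simp only [eval_aeval, eval_mul, eval_C, eval_X]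
    exact hp s hs (Matrix.of fun i j => x (i, j))
  have hsign : (d.prod fun ij e => s ij.2 ^ e) = (-1) ^ ∑ i, d (i, j₀) := by
    rw [Finsupp.prod_pow_snd, Fintype.prod_eq_single j₀ fun j hj => by simp [s, hj]]
    simp [s]
  have hcoeff := congrArg (coeff d) hfix
  rw [coeff_aeval_C_mul_X, hsign] at hcoeff
  exact (neg_one_pow_eq_one_iff_even hR).mp (mul_left_cancel₀ hd (hcoeff.trans (mul_one _).symm))

theorem monomial_mem_range_columnProducts [Fintype m] [Fintype κ] [CommSemiring R]
    {d : (m × κ) →₀ ℕ} (hd : ∀ j, Even (∑ i, d (i, j))) :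
    monomial d 1 ∈ (columnProducts R m κ).range := by
  have hcol : ∀ j, ∏ i, (X (i, j) : MvPolynomial (m × κ) R) ^ d (i, j) ∈
      (columnProducts R m κ).range.toSubmonoid := by
    intro j
    refine Submonoid.closure_le.mpr ?_ (Finset.prod_pow_mem_closure_of_even_sum _ _ _ (hd j))
    rintro _ ⟨⟨a, b⟩, rfl⟩
    exact ⟨X (a, b, j), aeval_X _ _⟩
  rw [monomial_eq, C_1, one_mul, Finsupp.prod_fintype _ _ fun _ => pow_zero _,
    Fintype.prod_prod_type, Finset.prod_comm]
  exact Subalgebra.prod_mem _ fun j _ => hcol j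

theorem HasEvenColumnDegrees.mem_range_columnProducts [Fintype m] [Fintype κ] [CommSemiring R]
    {p : MvPolynomial (m × κ) R} (hp : HasEvenColumnDegrees p) :
    p ∈ (columnProducts R m κ).range := by
  rw [p.as_sum]
  refine Subalgebra.sum_mem _ fun d hd => ?_
  rw [← mul_one (coeff d p), ← smul_eq_mul, ← smul_monomial]
  exact Subalgebra.smul_mem _
    (monomial_mem_range_columnProducts (hp d (mem_support_iff.mp hd))) _

theorem factorsThroughColumnProducts_of_mem_range [CommSemiring R] {p : MvPolynomial (m × κ) R}
    (hp : p ∈ (columnProducts R m κ).range) : FactorsThroughColumnProducts p := by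
  obtain ⟨q, rfl⟩ := hp
  refine ⟨q, fun V => ?_⟩
  simp only [AlgHom.toRingHom_eq_coe, RingHom.coe_coe, columnProducts, eval_aeval, eval_mul,
    eval_X]

theorem FactorsThroughColumnProducts.isColumnSignInvariant [CommRing R]
    {p : MvPolynomial (m × κ) R} (hp : FactorsThroughColumnProducts p) :
    IsColumnSignInvariant p := by
  obtain ⟨q, hq⟩ := hp
  intro s hs V
  have hsq : ∀ j, s j * s j = 1 := fun j => by rcases hs j with h | h <;> simp [h]
  calc eval (fun ij => s ij.2 * V ij.1 ij.2) p
      = eval (fun t => s t.2.2 * V t.1 t.2.2 * (s t.2.2 * V t.2.1 t.2.2)) q :=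
        hq (Matrix.of fun i j => s j * V i j)
    _ = eval (fun t => V t.1 t.2.2 * V t.2.1 t.2.2) q := by
        congr 2 with t; linear_combination (V t.1 t.2.2 * V t.2.1 t.2.2) * hsq t.2.2
    _ = eval (fun ij => V ij.1 ij.2) p := (hq V).symm

end ColumnSigns

/-- A polynomial `p : ℝ^(n×k) → ℝ` is invariant under independent sign
flips of columns iff every monomial with nonzero coefficient uses each column's
variables an even total number of times; equivalently, iff there is a polynomial `q`
on `ℝ^(n×n×k)` with `p(V) = q([V_{i₁,j} V_{i₂,j}])`. -/
theorem stmt6 (n k : ℕ) (p : MvPolynomial (Fin n × Fin k) ℝ) :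
    ((∀ (s : Fin k → ℝ), (∀ j, s j = 1 ∨ s j = -1) →
        ∀ V : Matrix (Fin n) (Fin k) ℝ,
          eval (fun ij => s ij.2 * V ij.1 ij.2) p = eval (fun ij => V ij.1 ij.2) p)
      ↔ ∀ d : (Fin n × Fin k) →₀ ℕ, coeff d p ≠ 0 →
          ∀ j : Fin k, Even (∑ i : Fin n, d (i, j)))
    ∧
    ((∀ (s : Fin k → ℝ), (∀ j, s j = 1 ∨ s j = -1) →
        ∀ V : Matrix (Fin n) (Fin k) ℝ,
          eval (fun ij => s ij.2 * V ij.1 ij.2) p = eval (fun ij => V ij.1 ij.2) p)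
      ↔ ∃ q : MvPolynomial (Fin n × Fin n × Fin k) ℝ,
          ∀ V : Matrix (Fin n) (Fin k) ℝ,
            eval (fun ij => V ij.1 ij.2) p
              = eval (fun t => V t.1 t.2.2 * V t.2.1 t.2.2) q) := by
  have hA : IsColumnSignInvariant p → HasEvenColumnDegrees p :=
    IsColumnSignInvariant.hasEvenColumnDegrees (by norm_num)
  have hB : HasEvenColumnDegrees p → FactorsThroughColumnProducts p := fun h =>
    factorsThroughColumnProducts_of_mem_range h.mem_range_columnProducts
  have hQ : FactorsThroughColumnProducts p → IsColumnSignInvariant p :=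
    FactorsThroughColumnProducts.isColumnSignInvariant
  exact ⟨⟨hA, hQ ∘ hB⟩, hB ∘ hA, hQ⟩
end

section
/- If m₁ + m₂ is odd, then the only linear map L: ℝ^(k^{m₁}) → ℝ^(k^{m₂}) between tensor spaces that is equivariant to diagonal sign actions (L(s·V) = s·(LV) for all s ∈ {-1,1}^k, where s acts on an order-m tensor by multiplying entry (i₁,...,i_m) by s_{i₁}···s_{i_m}) is the zero map. -/
/-! The constant sign vector `-1` acts on order-`m` tensors as the scalar `(-1)^m`; equivariance
under it forces `(-1)^m₁ • L V = (-1)^m₂ • L V`, and when `m₁ + m₂` is odd this says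
`L V = -L V`. -/

/-- The action of a sign vector `s ∈ {-1,1}^k` on an order-`m` tensor in `ℝ^(k^m)`:
entry `(i₁,…,i_m)` is multiplied by `s_{i₁} ⋯ s_{i_m}`. -/
def signTensorAction {k m : ℕ} (s : Fin k → ℝ) (V : (Fin m → Fin k) → ℝ) :
    (Fin m → Fin k) → ℝ :=
  fun idx => (∏ t : Fin m, s (idx t)) * V idx

lemma signTensorAction_const {k m : ℕ} (c : ℝ) (V : (Fin m → Fin k) → ℝ) :
    signTensorAction (fun _ => c) V = c ^ m • V := by
  funext idx
  simp [signTensorAction]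

/-- If `m₁ + m₂` is odd, the only sign equivariant linear map between
tensor spaces `ℝ^(k^{m₁}) → ℝ^(k^{m₂})` is the zero map. -/
theorem stmt7 (k m₁ m₂ : ℕ) (hodd : Odd (m₁ + m₂))
    (L : ((Fin m₁ → Fin k) → ℝ) →ₗ[ℝ] ((Fin m₂ → Fin k) → ℝ))
    (hL : ∀ (s : Fin k → ℝ), (∀ i, s i = 1 ∨ s i = -1) →
      ∀ V, L (signTensorAction s V) = signTensorAction s (L V)) :
    L = 0 := by
  refine LinearMap.ext fun V => ?_
  have hneg : (-1 : ℝ) ^ m₁ • L V = (-1 : ℝ) ^ m₂ • L V := by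
    simpa only [signTensorAction_const, map_smul] using
      hL (fun _ => -1) (fun _ => Or.inr rfl) V
  have hself : L V = -L V :=
    calc L V = (-1 : ℝ) ^ m₁ • ((-1 : ℝ) ^ m₁ • L V) := by
          rw [smul_smul, ← pow_add, ← two_mul, pow_mul, neg_one_sq, one_pow, one_smul]
      _ = (-1 : ℝ) ^ m₁ • ((-1 : ℝ) ^ m₂ • L V) := by rw [hneg]
      _ = -L V := by rw [smul_smul, ← pow_add, hodd.neg_one_pow, neg_one_smul]
  exact self_eq_neg.mp hself
end

section
/- The dimension of the real vector space of sign equivariant linear maps from ℝ^(k^{m₁}) to ℝ^(k^{m₂}) equals (1/2^k) Σ_{s ∈ {-1,1}^k} (s₁ + ... + s_k)^{m₁+m₂}. -/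
/-- The subspace of sign equivariant linear maps `ℝ^(k^{m₁}) → ℝ^(k^{m₂})`. -/
noncomputable def signEquivMaps (k m₁ m₂ : ℕ) :
    Submodule ℝ (((Fin m₁ → Fin k) → ℝ) →ₗ[ℝ] ((Fin m₂ → Fin k) → ℝ)) where
  carrier := {L | ∀ (s : Fin k → ℝ), (∀ i, s i = 1 ∨ s i = -1) →
    ∀ V, L (signTensorAction s V) = signTensorAction s (L V)}
  add_mem' := by
    intro a b ha hb s hs V
    funext idx
    simp [LinearMap.add_apply, ha s hs V, hb s hs V, signTensorAction, mul_add]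
  zero_mem' := by
    intro s hs V
    funext idx
    simp [signTensorAction]
  smul_mem' := by
    intro c a ha s hs V
    funext idx
    simp [LinearMap.smul_apply, ha s hs V, signTensorAction]
    ring

open Finset Matrix Module

theorem finrank_iInf_ker_proj_compl (R : Type*) [Field R] {α : Type*} [Fintype α] (S : Set α)
    [DecidablePred (· ∈ S)] :
    finrank R (⨅ i ∈ Sᶜ, LinearMap.ker (LinearMap.proj i : (α → R) →ₗ[R] R) :
      Submodule R (α → R)) = Fintype.card S :=
  (LinearMap.iInfKerProjEquiv R (fun _ => R) disjoint_compl_right (by simp)).finrank_eq.trans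
    (finrank_fintype_fun_eq_card R)

theorem Matrix.diagonal_mulVec_eq_mul {R n : Type*} [CommRing R] [Fintype n] [DecidableEq n]
    (d V : n → R) : diagonal d *ᵥ V = d * V :=
  funext (mulVec_diagonal d V)

theorem LinearMap.forall_map_mul_eq_mul_iff {R ι κ : Type*} [CommRing R] [Fintype ι] [Fintype κ]
    [DecidableEq ι] [DecidableEq κ] (L : (κ → R) →ₗ[R] ι → R) (d₁ : κ → R) (d₂ : ι → R) :
    (∀ V, L (d₁ * V) = d₂ * L V) ↔ ∀ i j, toMatrix' L i j * d₁ j = d₂ i * toMatrix' L i j := by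
  simp only [← diagonal_mulVec_eq_mul, ← Matrix.toLin'_apply, ← comp_apply, ← LinearMap.ext_iff]
  rw [← toMatrix'.injective.eq_iff, toMatrix'_comp, toMatrix'_comp, ← Matrix.ext_iff]
  simp only [toMatrix'_toLin', mul_diagonal, diagonal_mul]

theorem sum_units_int_hom_mul_eq_ite {G R : Type*} [Group G] [Fintype G] [CommRing R] [IsDomain R]
    [CharZero R] (χ ψ : G →* ℤˣ) [Decidable (χ = ψ)] :
    ∑ g, ((χ g : ℤ) : R) * ((ψ g : ℤ) : R) = if χ = ψ then (Fintype.card G : R) else 0 := by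
  let toR : ℤˣ →* R := (Int.castRingHom R).toMonoidHom.comp (Units.coeHom ℤ)
  have htoR : Function.Injective toR := fun _ _ h => Units.val_injective (Int.cast_injective h)
  have hψ : ψ⁻¹ = ψ := MonoidHom.ext fun g => Int.units_inv_eq_self (ψ g)
  have hone : toR.comp (χ * ψ) = 1 ↔ χ = ψ := by
    rw [← toR.comp_one, MonoidHom.cancel_left htoR, mul_eq_one_iff_eq_inv, hψ]
  classical
  calc ∑ g, ((χ g : ℤ) : R) * ((ψ g : ℤ) : R) = ∑ g, toR.comp (χ * ψ) g := by simp [toR]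
    _ = _ := by rw [sum_hom_units]; simp only [hone]; split_ifs <;> simp

section Signs

variable {ι : Type*}

/-- Sign vectors are parametrised by the group `ι → ℤˣ`, so that the characters of the action
are monoid homomorphisms. -/
def signEmbed (σ : ι → ℤˣ) : ι → ℝ := fun i => ((σ i : ℤ) : ℝ)

theorem signEmbed_injective : Function.Injective (signEmbed (ι := ι)) :=
  fun _ _ h => funext fun i => Units.val_injective (Int.cast_injective (congrFun h i))

theorem exists_signEmbed_eq_iff {s : ι → ℝ} :
    (∃ σ, signEmbed σ = s) ↔ ∀ i, s i = 1 ∨ s i = -1 := by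
  constructor
  · rintro ⟨σ, rfl⟩ i
    rcases Int.units_eq_one_or (σ i) with h | h <;> simp [signEmbed, h]
  · intro hs
    have : ∀ i, ∃ u : ℤˣ, ((u : ℤ) : ℝ) = s i := fun i =>
      (hs i).elim (fun h => ⟨1, by simp [h]⟩) (fun h => ⟨-1, by simp [h]⟩)
    choose σ hσ using this
    exact ⟨σ, funext hσ⟩

theorem sum_piFinset_neg_one_one [Fintype ι] [DecidableEq ι] (F : (ι → ℝ) → ℝ) :
    ∑ s ∈ Fintype.piFinset (fun _ : ι => ({-1, 1} : Finset ℝ)), F s = ∑ σ, F (signEmbed σ) := by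
  symm
  apply sum_nbij signEmbed
  · intro σ _
    simp only [Fintype.mem_piFinset, mem_insert, mem_singleton]
    exact fun i => (exists_signEmbed_eq_iff.mp ⟨σ, rfl⟩ i).symm
  · exact signEmbed_injective.injOn
  · intro s hs
    simp only [coe_univ, Set.image_univ, Set.mem_range]
    apply exists_signEmbed_eq_iff.mpr
    simpa [or_comm] using hs
  · intro _ _
    rfl

def signChar {μ : Type*} [Fintype μ] (a : μ → ι) : (ι → ℤˣ) →* ℤˣ where
  toFun σ := ∏ t, σ (a t)
  map_one' := by simp
  map_mul' σ τ := by simp [prod_mul_distrib]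

theorem sum_signEmbed_pow [Fintype ι] (σ : ι → ℤˣ) (m₁ m₂ : ℕ) :
    (∑ i, signEmbed σ i) ^ (m₁ + m₂) = ∑ p : (Fin m₂ → ι) × (Fin m₁ → ι),
      ((signChar p.1 σ : ℤ) : ℝ) * ((signChar p.2 σ : ℤ) : ℝ) := by
  rw [pow_add, mul_comm, Fintype.sum_pow, Fintype.sum_pow, sum_mul_sum, Fintype.sum_prod_type]
  simp [signEmbed, signChar]

end Signs

theorem signTensorAction_signEmbed {k m : ℕ} (σ : Fin k → ℤˣ) (V : (Fin m → Fin k) → ℝ) :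
    signTensorAction (signEmbed σ) V = (fun a => ((signChar a σ : ℤ) : ℝ)) * V := by
  funext a
  simp [signTensorAction, signEmbed, signChar]

theorem mem_signEquivMaps_iff {k m₁ m₂ : ℕ}
    (L : ((Fin m₁ → Fin k) → ℝ) →ₗ[ℝ] (Fin m₂ → Fin k) → ℝ) :
    L ∈ signEquivMaps k m₁ m₂ ↔
      ∀ a b, signChar a ≠ signChar b → LinearMap.toMatrix' L a b = 0 := by
  have hsigns : L ∈ signEquivMaps k m₁ m₂ ↔ ∀ σ V, L (signTensorAction (signEmbed σ) V) =
      signTensorAction (signEmbed σ) (L V) := by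
    change (∀ s : Fin k → ℝ, (∀ i, s i = 1 ∨ s i = -1) → _) ↔ _
    simp only [← exists_signEmbed_eq_iff, forall_exists_index, forall_apply_eq_imp_iff]
  simp only [hsigns, signTensorAction_signEmbed, LinearMap.forall_map_mul_eq_mul_iff]
  refine forall_comm.trans (forall_congr' fun a => forall_comm.trans (forall_congr' fun b => ?_))
  simp only [mul_comm (LinearMap.toMatrix' L a b), mul_eq_mul_right_iff, Int.cast_inj,
    Units.val_inj]
  rw [forall_or_right, ← MonoidHom.ext_iff, or_iff_not_imp_left, ne_comm]

theorem finrank_signEquivMaps (k m₁ m₂ : ℕ)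
    [DecidablePred fun p : (Fin m₂ → Fin k) × (Fin m₁ → Fin k) => signChar p.1 = signChar p.2] :
    finrank ℝ (signEquivMaps k m₁ m₂) =
      Fintype.card {p : (Fin m₂ → Fin k) × (Fin m₁ → Fin k) // signChar p.1 = signChar p.2} := by
  let e := LinearMap.toMatrix' ≪≫ₗ (ofLinearEquiv ℝ).symm ≪≫ₗ
    (LinearEquiv.curry ℝ ℝ (Fin m₂ → Fin k) (Fin m₁ → Fin k)).symm
  have he : ∀ M a b, LinearMap.toMatrix' (e.symm M) a b = M (a, b) := fun M a b => by
    simp only [e, LinearEquiv.trans_symm, LinearEquiv.trans_apply, LinearEquiv.apply_symm_apply,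
      LinearEquiv.symm_symm]
    rfl
  have hmap : (signEquivMaps k m₁ m₂).map e.toLinearMap =
      ⨅ p ∈ {p : (Fin m₂ → Fin k) × (Fin m₁ → Fin k) | signChar p.1 = signChar p.2}ᶜ,
        LinearMap.ker (LinearMap.proj p) := by
    ext M
    simp only [Submodule.mem_map_equiv, mem_signEquivMaps_iff, he, Submodule.mem_iInf,
      LinearMap.mem_ker, LinearMap.proj_apply, Set.mem_compl_iff, Set.mem_ofPred_eq, Prod.forall]
  rw [← LinearEquiv.finrank_map_eq e, hmap, finrank_iInf_ker_proj_compl]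
  rfl

/-- The dimension of the space of sign equivariant linear maps from
`ℝ^(k^{m₁})` to `ℝ^(k^{m₂})` equals `(1/2^k) Σ_{s ∈ {-1,1}^k} (s₁+⋯+s_k)^{m₁+m₂}`. -/
theorem stmt8 (k m₁ m₂ : ℕ) :
    (Module.finrank ℝ (signEquivMaps k m₁ m₂) : ℝ)
      = (1 / 2 ^ k) *
        ∑ s ∈ Fintype.piFinset (fun _ : Fin k => ({-1, 1} : Finset ℝ)),
          (∑ i : Fin k, s i) ^ (m₁ + m₂) := by
  classical
  have horth : ∀ p : (Fin m₂ → Fin k) × (Fin m₁ → Fin k),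
      ∑ σ, ((signChar p.1 σ : ℤ) : ℝ) * ((signChar p.2 σ : ℤ) : ℝ) =
        if signChar p.1 = signChar p.2 then 2 ^ k else 0 := fun p => by
    rw [sum_units_int_hom_mul_eq_ite]
    simp
  rw [finrank_signEquivMaps, sum_piFinset_neg_one_one, sum_congr rfl fun σ _ =>
    sum_signEmbed_pow σ m₁ m₂, sum_comm, sum_congr rfl fun p _ => horth p, sum_ite,
    sum_const_zero, add_zero, sum_const, nsmul_eq_mul, Fintype.card_subtype]
  field_simp
end

section
/- Let A be an n×n real symmetric matrix, let v₁,...,v_k be orthonormal eigenvectors of A with distinct (simple) eigenvalues λ₁,...,λ_k, and let P be a permutation matrix with PAP^T = A and Pe_i = e_j. If f: ℝ^(n×k) → ℝ^(n×d) is permutation equivariant (f(QV) = Qf(V) for all permutation matrices Q) and sign invariant (f(VS) = f(V) for all S ∈ diag({-1,1}^k)), then the i-th and j-th rows of f(V) coincide, where V = [v₁,...,v_k]. -/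
/-!
Since `P` commutes with `A`, it maps each simple eigenvector `vₗ` to an eigenvector of the same
eigenvalue, hence to a multiple `c vₗ`; as `P` preserves the norm, `c = ±1`. Thus `PV = VS` for a
sign matrix `S`, and equivariance and sign invariance give `P f(V) = f(PV) = f(VS) = f(V)`. Row `j`
of `P f(V)` is row `i` of `f(V)`.
-/

open Matrix Equiv

variable {n k R : Type*} [Fintype n]

lemma commute_permMatrix_of_conj_eq [DecidableEq n] [CommRing R] {σ : Perm n}
    {A : Matrix n n R}
    (h : σ.permMatrix R * A * (σ.permMatrix R)ᵀ = A) : Commute A (σ.permMatrix R) := by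
  have hinv : (σ.permMatrix R)ᵀ * σ.permMatrix R = 1 := by
    rw [transpose_permMatrix, ← permMatrix_mul, mul_inv_cancel, permMatrix_one]
  calc A * σ.permMatrix R
      = σ.permMatrix R * A * ((σ.permMatrix R)ᵀ * σ.permMatrix R) := by
        rw [← Matrix.mul_assoc, h]
    _ = σ.permMatrix R * A := by rw [hinv, Matrix.mul_one]

lemma exists_comp_perm_eq_smul_of_eigenvector [DecidableEq n] [CommRing R] {σ : Perm n}
    {A : Matrix n n R} (hcomm : Commute A (σ.permMatrix R)) {v : n → R} {μ : R}
    (hv : A *ᵥ v = μ • v) (hsimple : ∀ w, A *ᵥ w = μ • w → ∃ c : R, w = c • v) :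
    ∃ c : R, v ∘ σ = c • v :=
  hsimple _ <| by
    rw [← permMatrix_mulVec, mulVec_mulVec, hcomm.eq, ← mulVec_mulVec, hv, mulVec_smul]

lemma eq_one_or_eq_neg_one_of_comp_perm_eq_smul [CommRing R] [IsDomain R] {σ : Perm n}
    {v : n → R} (hv : v ⬝ᵥ v ≠ 0) {c : R} (h : v ∘ σ = c • v) : c = 1 ∨ c = -1 := by
  have : c * c * (v ⬝ᵥ v) = 1 * (v ⬝ᵥ v) := calc
    c * c * (v ⬝ᵥ v) = v ∘ σ ⬝ᵥ v ∘ σ := by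
      rw [h, smul_dotProduct, dotProduct_smul, smul_eq_mul, smul_eq_mul, mul_assoc]
    _ = 1 * (v ⬝ᵥ v) := by rw [one_mul, comp_equiv_dotProduct_comp_equiv]
  exact mul_self_eq_one_iff.mp (mul_right_cancel₀ hv this)

lemma exists_signs_permMatrix_mul_eq_mul_diagonal [DecidableEq n] [Fintype k] [DecidableEq k]
    [CommRing R] [IsDomain R] {σ : Perm n} {A : Matrix n n R} (hcomm : Commute A (σ.permMatrix R))
    {V : Matrix n k R} {μ : k → R}
    (heig : ∀ l, A *ᵥ Vᵀ l = μ l • Vᵀ l) (hnorm : ∀ l, Vᵀ l ⬝ᵥ Vᵀ l ≠ 0)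
    (hsimple : ∀ l w, A *ᵥ w = μ l • w → ∃ c : R, w = c • Vᵀ l) :
    ∃ s : k → R, (∀ l, s l = 1 ∨ s l = -1) ∧ σ.permMatrix R * V = V * diagonal s := by
  choose s hs using fun l => exists_comp_perm_eq_smul_of_eigenvector hcomm (heig l) (hsimple l)
  refine ⟨s, fun l => eq_one_or_eq_neg_one_of_comp_perm_eq_smul (hnorm l) (hs l), ?_⟩
  ext a l
  rw [mul_diagonal, PEquiv.toMatrix_toPEquiv_mul, submatrix_apply, id, mul_comm]
  exact congrFun (hs l) a

theorem stmt10_general (n k d : ℕ) (A : Matrix (Fin n) (Fin n) ℝ)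
    (V : Matrix (Fin n) (Fin k) ℝ) (μ : Fin k → ℝ)
    (heig : ∀ l : Fin k, A.mulVec (fun i => V i l) = μ l • (fun i => V i l))
    (horth : ∀ l m : Fin k, (∑ i : Fin n, V i l * V i m) = if l = m then 1 else 0)
    (hsimple : ∀ (l : Fin k) (w : Fin n → ℝ), A.mulVec w = μ l • w →
      ∃ c : ℝ, w = c • (fun i => V i l))
    (P : Matrix (Fin n) (Fin n) ℝ)
    (hP : ∃ σ : Equiv.Perm (Fin n), P = σ.permMatrix ℝ)
    (hPA : P * A * Pᵀ = A)
    (i j : Fin n) (hij : P.mulVec (Pi.single i 1) = Pi.single j 1)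
    (f : Matrix (Fin n) (Fin k) ℝ → Matrix (Fin n) (Fin d) ℝ)
    (hperm : ∀ (Q : Matrix (Fin n) (Fin n) ℝ),
      (∃ σ : Equiv.Perm (Fin n), Q = σ.permMatrix ℝ) →
      ∀ X, f (Q * X) = Q * f X)
    (hsign : ∀ (s : Fin k → ℝ), (∀ l, s l = 1 ∨ s l = -1) →
      ∀ X, f (X * Matrix.diagonal s) = f X) :
    ∀ l : Fin d, f V i l = f V j l := by
  obtain ⟨σ, rfl⟩ := hP
  obtain ⟨s, hs, hPV⟩ := exists_signs_permMatrix_mul_eq_mul_diagonal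
    (commute_permMatrix_of_conj_eq hPA) heig (fun l => by simp [dotProduct, horth]) hsimple
  have hfix : σ.permMatrix ℝ * f V = f V := by rw [← hperm _ ⟨σ, rfl⟩, hPV, hsign s hs]
  have hσj : σ j = i := by
    have := congrFun hij j
    rw [permMatrix_mulVec, Function.comp_apply, Pi.single_eq_same] at this
    by_contra hne
    simp [hne] at this
  intro l
  have := congrFun (congrFun hfix j) l
  rwa [PEquiv.toMatrix_toPEquiv_mul, submatrix_apply, hσj, id] at this

/-- Let `A` be symmetric with orthonormal eigenvectors (the columns of
`V`) for distinct simple eigenvalues `μ`, and `P` a permutation matrix automorphism of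
`A` mapping `e_i` to `e_j`. If `f` is permutation equivariant and sign invariant, then
rows `i` and `j` of `f(V)` coincide. -/
theorem stmt10 (n k d : ℕ) (A : Matrix (Fin n) (Fin n) ℝ) (hA : A.IsSymm)
    (V : Matrix (Fin n) (Fin k) ℝ) (μ : Fin k → ℝ)
    (heig : ∀ l : Fin k, A.mulVec (fun i => V i l) = μ l • (fun i => V i l))
    (horth : ∀ l m : Fin k, (∑ i : Fin n, V i l * V i m) = if l = m then 1 else 0)
    (hdistinct : Function.Injective μ)
    (hsimple : ∀ (l : Fin k) (w : Fin n → ℝ), A.mulVec w = μ l • w →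
      ∃ c : ℝ, w = c • (fun i => V i l))
    (P : Matrix (Fin n) (Fin n) ℝ)
    (hP : ∃ σ : Equiv.Perm (Fin n), P = σ.permMatrix ℝ)
    (hPA : P * A * Pᵀ = A)
    (i j : Fin n) (hij : P.mulVec (Pi.single i 1) = Pi.single j 1)
    (f : Matrix (Fin n) (Fin k) ℝ → Matrix (Fin n) (Fin d) ℝ)
    (hperm : ∀ (Q : Matrix (Fin n) (Fin n) ℝ),
      (∃ σ : Equiv.Perm (Fin n), Q = σ.permMatrix ℝ) →
      ∀ X, f (Q * X) = Q * f X)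
    (hsign : ∀ (s : Fin k → ℝ), (∀ l, s l = 1 ∨ s l = -1) →
      ∀ X, f (X * Matrix.diagonal s) = f X) :
    ∀ l : Fin d, f V i l = f V j l :=
  stmt10_general n k d A V μ heig horth hsimple P hP hPA i j hij f hperm hsign
end

section
/- Let 𝒳 ⊆ ℝ^(n×k) be a set closed under right multiplication by O(k), such that every X ∈ 𝒳 has cov(X) with distinct eigenvalues, and for each X let R_X ∈ O(k) be a choice of orthonormal eigenvector matrix of cov(X) (ordered by eigenvalue). If h: 𝒳 → ℝ^(n×k) is sign equivariant (h(XS) = h(X)S for all S ∈ diag({-1,1}^k)), then f(X) := h(XR_X)R_X^T is well-defined (independent of the sign choices in R_X) and orthogonally equivariant: f(XQ) = f(X)Q for all Q ∈ O(k). -/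
/-!
Two orthonormal eigenbases `R, R'` of the same matrix, both ordered by strictly increasing simple
eigenvalues, differ by a sign matrix: `C = Rᵀ R'` is orthogonal and intertwines the two diagonal
eigenvalue matrices, which forces the eigenvalue lists to coincide and then `C` to be diagonal with
entries `±1`. Sign equivariance of `h` makes `h (X R) Rᵀ` blind to such sign changes, which gives
well-definedness. Since `cov (X Q) = Qᵀ cov(X) Q`, the matrix `Qᵀ R_X` is an admissible eigenbasis for
`X Q`, so `R_{XQ} = Qᵀ R_X S` and equivariance follows from the same sign invariance.
-/

open scoped Matrix

/-- Centered covariance `cov(X) = (X - (1/n)𝟙𝟙ᵀX)ᵀ (X - (1/n)𝟙𝟙ᵀX)`. -/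
noncomputable def cov {n k : ℕ} (X : Matrix (Fin n) (Fin k) ℝ) :
    Matrix (Fin k) (Fin k) ℝ :=
  (X - ((1 : ℝ) / n) • (Matrix.of (fun _ _ => (1 : ℝ)) * X))ᵀ *
    (X - ((1 : ℝ) / n) • (Matrix.of (fun _ _ => (1 : ℝ)) * X))

namespace Matrix

variable {ι 𝕜 : Type*} [Fintype ι] [DecidableEq ι] [CommRing 𝕜]

lemma mul_eq_mul_diagonal_of_mulVec_eq {A R : Matrix ι ι 𝕜} {μ : ι → 𝕜}
    (hR : ∀ l, A *ᵥ (fun i => R i l) = μ l • (fun i => R i l)) :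
    A * R = R * diagonal μ := by
  ext i l
  rw [mul_diagonal, mul_comm]
  exact congrFun (hR l) i

lemma transpose_mul_self_mul_eq_one {A B : Matrix ι ι 𝕜} (hA : Aᵀ * A = 1) (hB : Bᵀ * B = 1) :
    (A * B)ᵀ * (A * B) = 1 := by
  rw [transpose_mul, Matrix.mul_assoc, ← Matrix.mul_assoc Aᵀ, hA, Matrix.one_mul, hB]

lemma conj_mul_eq_mul_diagonal {A R Q : Matrix ι ι 𝕜} {μ : ι → 𝕜} (hQ : Q * Qᵀ = 1)
    (hAR : A * R = R * diagonal μ) : (Qᵀ * A * Q) * (Qᵀ * R) = (Qᵀ * R) * diagonal μ := by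
  rw [Matrix.mul_assoc, ← Matrix.mul_assoc Q, hQ, Matrix.one_mul, Matrix.mul_assoc, hAR,
    Matrix.mul_assoc]

lemma transpose_mul_mul_diagonal_eq {A R R' : Matrix ι ι 𝕜} {μ ν : ι → 𝕜}
    (hRo : Rᵀ * R = 1) (hAR : A * R = R * diagonal μ) (hAR' : A * R' = R' * diagonal ν) :
    (Rᵀ * R') * diagonal ν = diagonal μ * (Rᵀ * R') := by
  have hRA : Rᵀ * A = diagonal μ * Rᵀ := by
    calc Rᵀ * A = Rᵀ * A * (R * Rᵀ) := by rw [mul_eq_one_comm.mp hRo, Matrix.mul_one]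
      _ = Rᵀ * R * diagonal μ * Rᵀ := by simp only [Matrix.mul_assoc, ← hAR]
      _ = diagonal μ * Rᵀ := by rw [hRo, Matrix.one_mul]
  rw [Matrix.mul_assoc, ← hAR', ← Matrix.mul_assoc, hRA, Matrix.mul_assoc]

lemma exists_ne_zero_of_transpose_mul_self_eq_one [Nontrivial 𝕜] {C : Matrix ι ι 𝕜}
    (hC : Cᵀ * C = 1) (l : ι) : ∃ m, C m l ≠ 0 := by
  by_contra! hcol
  simpa [mul_apply, hcol] using congrFun (congrFun hC l) l

variable [IsDomain 𝕜]

lemma entry_eq_zero_of_mul_diagonal_eq {C : Matrix ι ι 𝕜} {μ ν : ι → 𝕜}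
    (hC : C * diagonal ν = diagonal μ * C) {m l : ι} (hml : ν l ≠ μ m) : C m l = 0 := by
  have hent : C m l * ν l = μ m * C m l := by simpa using congrFun (congrFun hC m) l
  by_contra hne
  exact hml (mul_left_cancel₀ hne (by rw [hent, mul_comm]))

lemma range_subset_of_mul_diagonal_eq {C : Matrix ι ι 𝕜} {μ ν : ι → 𝕜}
    (hCo : Cᵀ * C = 1) (hC : C * diagonal ν = diagonal μ * C) :
    Set.range ν ⊆ Set.range μ := by
  rintro _ ⟨l, rfl⟩
  obtain ⟨m, hm⟩ := exists_ne_zero_of_transpose_mul_self_eq_one hCo l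
  by_contra hl
  exact hm (entry_eq_zero_of_mul_diagonal_eq hC fun h => hl ⟨m, h.symm⟩)

lemma isDiag_of_mul_diagonal_eq {C : Matrix ι ι 𝕜} {μ : ι → 𝕜} (hμ : Function.Injective μ)
    (hC : C * diagonal μ = diagonal μ * C) : C.IsDiag :=
  fun _ _ hml => entry_eq_zero_of_mul_diagonal_eq hC (hμ.ne (Ne.symm hml))

lemma diagonal_mul_self_eq_one_iff {d : ι → 𝕜} :
    diagonal d * diagonal d = 1 ↔ ∀ j, d j = 1 ∨ d j = -1 := by
  simp only [diagonal_mul_diagonal, ← diagonal_one, diagonal_eq_diagonal_iff, mul_self_eq_one_iff]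

lemma exists_signs_of_eigenbases [LinearOrder ι] [PartialOrder 𝕜] {A R R' : Matrix ι ι 𝕜}
    {μ ν : ι → 𝕜} (hμ : StrictMono μ) (hν : StrictMono ν) (hRo : Rᵀ * R = 1)
    (hR'o : R'ᵀ * R' = 1) (hAR : A * R = R * diagonal μ) (hAR' : A * R' = R' * diagonal ν) :
    ∃ s : ι → 𝕜, (∀ j, s j = 1 ∨ s j = -1) ∧ R' = R * diagonal s := by
  set C := Rᵀ * R'
  have hCo : Cᵀ * C = 1 :=
    transpose_mul_self_mul_eq_one (by rw [transpose_transpose, mul_eq_one_comm, hRo]) hR'o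
  have hC : C * diagonal ν = diagonal μ * C := transpose_mul_mul_diagonal_eq hRo hAR hAR'
  have hCt : Cᵀ * diagonal μ = diagonal ν * Cᵀ := by
    simpa only [transpose_mul, diagonal_transpose] using (congrArg transpose hC).symm
  have hνμ : ν = μ := (hν.range_inj hμ).mp <| (range_subset_of_mul_diagonal_eq hCo hC).antisymm <|
    range_subset_of_mul_diagonal_eq (by rwa [transpose_transpose, mul_eq_one_comm]) hCt
  subst hνμ
  have hdiag := (isDiag_of_mul_diagonal_eq hν.injective hC).diagonal_diag
  refine ⟨C.diag, diagonal_mul_self_eq_one_iff.mp ?_, ?_⟩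
  · rw [← hdiag, diagonal_transpose] at hCo
    exact hCo
  · rw [hdiag, ← Matrix.mul_assoc, mul_eq_one_comm.mp hRo, Matrix.one_mul]

end Matrix

open Matrix

/-- `cov` as written elaborates `of _ * X` through the `CStarMatrix` multiplication instance, which
blocks rewriting with `Matrix` lemmas; this is the same matrix with `Matrix` multiplication. -/
lemma cov_eq {n k : ℕ} (X : Matrix (Fin n) (Fin k) ℝ) :
    cov X = (X - ((1 : ℝ) / n) • ((of fun _ _ => 1 : Matrix (Fin n) (Fin n) ℝ) * X))ᵀ *
      (X - ((1 : ℝ) / n) • ((of fun _ _ => 1 : Matrix (Fin n) (Fin n) ℝ) * X)) :=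
  rfl

lemma cov_mul {n k : ℕ} (X : Matrix (Fin n) (Fin k) ℝ) (Q : Matrix (Fin k) (Fin k) ℝ) :
    cov (X * Q) = Qᵀ * cov X * Q := by
  simp only [cov_eq, ← Matrix.mul_assoc, ← Matrix.smul_mul, ← Matrix.sub_mul, transpose_mul]

lemma apply_mul_diagonal_mul_transpose_eq {m ι 𝕜 : Type*} [Fintype ι] [DecidableEq ι] [CommRing 𝕜]
    {h : Matrix m ι 𝕜 → Matrix m ι 𝕜} {Y : Matrix m ι 𝕜} {M : Matrix ι ι 𝕜} {s : ι → 𝕜}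
    (hs : diagonal s * diagonal s = 1) (hY : h (Y * diagonal s) = h Y * diagonal s) :
    h (Y * diagonal s) * (M * diagonal s)ᵀ = h Y * Mᵀ := by
  rw [hY, transpose_mul, diagonal_transpose, Matrix.mul_assoc, ← Matrix.mul_assoc (diagonal s), hs,
    Matrix.one_mul]

/-- Let `𝒳` be closed under right multiplication by `O(k)`, with each
`cov X` (for `X ∈ 𝒳`) having distinct eigenvalues `μ X 0 < μ X 1 < ⋯`, and let
`R, R'` be two choices of orthonormal eigenvector matrices of `cov X` ordered by
eigenvalue. If `h` is sign equivariant on `𝒳`, then `f(X) = h(X R_X) R_Xᵀ` is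
well-defined (independent of the choice) and orthogonally equivariant. -/
theorem stmt14 (n k : ℕ) (𝒳 : Set (Matrix (Fin n) (Fin k) ℝ))
    (hclosed : ∀ X ∈ 𝒳, ∀ Q : Matrix (Fin k) (Fin k) ℝ, Qᵀ * Q = 1 → X * Q ∈ 𝒳)
    (μ : Matrix (Fin n) (Fin k) ℝ → Fin k → ℝ)
    (hμ : ∀ X ∈ 𝒳, StrictMono (μ X))
    (R R' : Matrix (Fin n) (Fin k) ℝ → Matrix (Fin k) (Fin k) ℝ)
    (hR : ∀ X ∈ 𝒳, (R X)ᵀ * R X = 1 ∧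
      ∀ l : Fin k, (cov X).mulVec (fun i => R X i l) = μ X l • (fun i => R X i l))
    (hR' : ∀ X ∈ 𝒳, (R' X)ᵀ * R' X = 1 ∧
      ∀ l : Fin k, (cov X).mulVec (fun i => R' X i l) = μ X l • (fun i => R' X i l))
    (h : Matrix (Fin n) (Fin k) ℝ → Matrix (Fin n) (Fin k) ℝ)
    (hsign : ∀ X ∈ 𝒳, ∀ s : Fin k → ℝ, (∀ j, s j = 1 ∨ s j = -1) →
      h (X * Matrix.diagonal s) = h X * Matrix.diagonal s) :
    (∀ X ∈ 𝒳, h (X * R' X) * (R' X)ᵀ = h (X * R X) * (R X)ᵀ) ∧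
    (∀ X ∈ 𝒳, ∀ Q : Matrix (Fin k) (Fin k) ℝ, Qᵀ * Q = 1 →
      h ((X * Q) * R (X * Q)) * (R (X * Q))ᵀ = (h (X * R X) * (R X)ᵀ) * Q) := by
  have invariant : ∀ X ∈ 𝒳, ∀ s : Fin k → ℝ, (∀ j, s j = 1 ∨ s j = -1) →
      h (X * R X * diagonal s) * (R X * diagonal s)ᵀ = h (X * R X) * (R X)ᵀ := fun X hX s hs =>
    apply_mul_diagonal_mul_transpose_eq (diagonal_mul_self_eq_one_iff.mpr hs)
      (hsign _ (hclosed X hX _ (hR X hX).1) s hs)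
  have eigen : ∀ X ∈ 𝒳, cov X * R X = R X * diagonal (μ X) := fun X hX =>
    mul_eq_mul_diagonal_of_mulVec_eq (hR X hX).2
  refine ⟨fun X hX => ?_, fun X hX Q hQ => ?_⟩
  · obtain ⟨s, hs, hR'X⟩ := exists_signs_of_eigenbases (hμ X hX) (hμ X hX) (hR X hX).1
      (hR' X hX).1 (eigen X hX) (mul_eq_mul_diagonal_of_mulVec_eq (hR' X hX).2)
    rw [hR'X, ← Matrix.mul_assoc, invariant X hX s hs]
  · have hQQ : Q * Qᵀ = 1 := mul_eq_one_comm.mp hQ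
    have hXQ := hclosed X hX Q hQ
    obtain ⟨s, hs, hRXQ⟩ := exists_signs_of_eigenbases (hμ X hX) (hμ _ hXQ)
      (transpose_mul_self_mul_eq_one (by rwa [transpose_transpose]) (hR X hX).1) (hR _ hXQ).1
      (cov_mul X Q ▸ conj_mul_eq_mul_diagonal hQQ (eigen X hX)) (eigen _ hXQ)
    rw [← invariant X hX s hs, hRXQ]
    simp only [transpose_mul, transpose_transpose, ← Matrix.mul_assoc]
    rw [Matrix.mul_assoc X Q, hQQ, Matrix.mul_one]
end

section
/- If f_target: 𝒳 → ℝ^(n×k) is O(k)-equivariant on a set 𝒳 ⊆ ℝ^(n×k) (where each cov(X) has distinct eigenvalues and 𝒳 is closed under O(k)), and h: 𝒳 → ℝ^(n×k) is sign equivariant with ‖h(X) - f_target(X)‖_F < ε for all X ∈ 𝒳, then f(X) := h(XR_X)R_X^T satisfies ‖f(X) - f_target(X)‖_F < ε for all X ∈ 𝒳. -/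
open scoped Matrix

/-- Frobenius norm of a real matrix. -/
noncomputable def frobNorm {n k : ℕ} (A : Matrix (Fin n) (Fin k) ℝ) : ℝ :=
  Real.sqrt (∑ i : Fin n, ∑ j : Fin k, (A i j) ^ 2)

/-! Since `ftarget (X * R X) = ftarget X * R X`, the error of `f` at `X` is the error of `h` at
`X * R X ∈ 𝒳` multiplied on the right by the orthogonal matrix `(R X)ᵀ`, and the Frobenius norm
is invariant under such multiplication. -/

lemma frobNorm_eq_sqrt_trace {m n : ℕ} (A : Matrix (Fin m) (Fin n) ℝ) :
    frobNorm A = √(A * Aᵀ).trace := by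
  simp [frobNorm, Matrix.trace, Matrix.mul_apply, sq]

lemma frobNorm_mul_of_mul_transpose_eq_one {m n p : ℕ} (A : Matrix (Fin m) (Fin n) ℝ)
    {Q : Matrix (Fin n) (Fin p) ℝ} (hQ : Q * Qᵀ = 1) :
    frobNorm (A * Q) = frobNorm A := by
  rw [frobNorm_eq_sqrt_trace, frobNorm_eq_sqrt_trace, Matrix.transpose_mul,
    Matrix.mul_assoc, ← Matrix.mul_assoc Q, hQ, Matrix.one_mul]

theorem stmt15_general (n k : ℕ) (𝒳 : Set (Matrix (Fin n) (Fin k) ℝ)) (ε : ℝ)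
    (hclosed : ∀ X ∈ 𝒳, ∀ Q : Matrix (Fin k) (Fin k) ℝ, Qᵀ * Q = 1 → X * Q ∈ 𝒳)
    (R : Matrix (Fin n) (Fin k) ℝ → Matrix (Fin k) (Fin k) ℝ)
    (hRorth : ∀ X ∈ 𝒳, (R X)ᵀ * R X = 1 ∧ R X * (R X)ᵀ = 1)
    (ftarget : Matrix (Fin n) (Fin k) ℝ → Matrix (Fin n) (Fin k) ℝ)
    (hft : ∀ X ∈ 𝒳, ∀ Q : Matrix (Fin k) (Fin k) ℝ, Qᵀ * Q = 1 →
      ftarget (X * Q) = ftarget X * Q)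
    (h : Matrix (Fin n) (Fin k) ℝ → Matrix (Fin n) (Fin k) ℝ)
    (happrox : ∀ X ∈ 𝒳, frobNorm (h X - ftarget X) < ε) :
    ∀ X ∈ 𝒳, frobNorm (h (X * R X) * (R X)ᵀ - ftarget X) < ε := by
  intro X hX
  obtain ⟨hRtR, hRRt⟩ := hRorth X hX
  have hrotated : frobNorm (h (X * R X) - ftarget X * R X) < ε := by
    simpa only [hft X hX (R X) hRtR] using happrox (X * R X) (hclosed X hX (R X) hRtR)
  have hRt : (R X)ᵀ * (R X)ᵀᵀ = 1 := by rwa [Matrix.transpose_transpose]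
  calc frobNorm (h (X * R X) * (R X)ᵀ - ftarget X)
      = frobNorm ((h (X * R X) - ftarget X * R X) * (R X)ᵀ) := by
        rw [Matrix.sub_mul, Matrix.mul_assoc, hRRt, Matrix.mul_one]
    _ = frobNorm (h (X * R X) - ftarget X * R X) := frobNorm_mul_of_mul_transpose_eq_one _ hRt
    _ < ε := hrotated

/-- If `f_target` is `O(k)`-equivariant on `𝒳` (closed under `O(k)`,
each `cov X` having distinct eigenvalues), `h` is sign equivariant, and
`‖h X - f_target X‖_F < ε` on `𝒳`, then `f(X) = h(X R_X) R_Xᵀ` satisfies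
`‖f X - f_target X‖_F < ε` on `𝒳`. -/
theorem stmt15 (n k : ℕ) (𝒳 : Set (Matrix (Fin n) (Fin k) ℝ)) (ε : ℝ)
    (hclosed : ∀ X ∈ 𝒳, ∀ Q : Matrix (Fin k) (Fin k) ℝ, Qᵀ * Q = 1 → X * Q ∈ 𝒳)
    (R : Matrix (Fin n) (Fin k) ℝ → Matrix (Fin k) (Fin k) ℝ)
    (hRorth : ∀ X ∈ 𝒳, (R X)ᵀ * R X = 1 ∧ R X * (R X)ᵀ = 1)
    (hReig : ∀ X ∈ 𝒳, ∃ μ : Fin k → ℝ, Function.Injective μ ∧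
      ∀ l : Fin k, (cov X).mulVec (fun i => R X i l) = μ l • (fun i => R X i l))
    (ftarget : Matrix (Fin n) (Fin k) ℝ → Matrix (Fin n) (Fin k) ℝ)
    (hft : ∀ X ∈ 𝒳, ∀ Q : Matrix (Fin k) (Fin k) ℝ, Qᵀ * Q = 1 →
      ftarget (X * Q) = ftarget X * Q)
    (h : Matrix (Fin n) (Fin k) ℝ → Matrix (Fin n) (Fin k) ℝ)
    (hsign : ∀ X ∈ 𝒳, ∀ s : Fin k → ℝ, (∀ j, s j = 1 ∨ s j = -1) →
      h (X * Matrix.diagonal s) = h X * Matrix.diagonal s)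
    (happrox : ∀ X ∈ 𝒳, frobNorm (h X - ftarget X) < ε) :
    ∀ X ∈ 𝒳, frobNorm (h (X * R X) * (R X)ᵀ - ftarget X) < ε :=
  stmt15_general n k 𝒳 ε hclosed R hRorth ftarget hft h happrox
end
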